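/- arXiv:2204.10204 — 3 statements merged into one kernel-verified Lean document; each statement's English description precedes it below -/
import Mathlib

section
/- Let w be a word having periods k and l. If |w| ≥ k + l - gcd(k,l), then gcd(k,l) is also a period of w. -/
/-!
Euclid's algorithm on the periods: if `k < l` are periods of `w`, the prefix of `w` of length
`|w| - k` has periods `k` and `l - k`, and is long enough for induction to give it the period
`g = gcd k l`. Since `g ∣ k` and that prefix contains the first `k` letters, `w` is a prefix of
`(w₀ ⋯ w_{g-1})^∞`: every letter satisfies `w i = w (i % k) = w (i % k % g) = w (i % g)`.
-/

/-- `p` is a period of the word `f 0, …, f (n - 1)`. -/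
def HasPeriod {β : Type*} (f : ℕ → β) (n p : ℕ) : Prop :=
  ∀ i, i + p < n → f i = f (i + p)

namespace HasPeriod

variable {β : Type*} {f : ℕ → β} {n m k l p g : ℕ}

theorem mono_length (h : HasPeriod f n p) (hmn : m ≤ n) : HasPeriod f m p :=
  fun i hi => h i (by omega)

theorem sub (hk : HasPeriod f n k) (hl : HasPeriod f n l) (hkl : k ≤ l) :
    HasPeriod f (n - k) (l - k) := fun i hi => by
  have hshift : i + (l - k) + k = i + l := by omega
  rw [hl i (by omega), hk (i + (l - k)) (by omega), hshift]

theorem iff_mod : HasPeriod f n p ↔ ∀ i < n, f i = f (i % p) := by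
  refine ⟨fun h i => ?_, fun h i hi => ?_⟩
  · induction i using Nat.strong_induction_on with
    | _ i ih =>
      intro hi
      rcases Nat.eq_zero_or_pos p with rfl | hp_pos
      · rw [Nat.mod_zero]
      rcases lt_or_ge i p with hip | hpi
      · rw [Nat.mod_eq_of_lt hip]
      · obtain ⟨j, rfl⟩ : ∃ j, i = j + p := ⟨i - p, by omega⟩
        rw [← h j hi, ih j (by omega) (by omega), Nat.add_mod_right]
  · rw [h i (by omega), h (i + p) hi, Nat.add_mod_right]

theorem of_prefix_of_dvd (hp : HasPeriod f n p) (hg : HasPeriod f m g) (hgp : g ∣ p)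
    (hp_pos : 0 < p) (hpm : p ≤ m) : HasPeriod f n g := by
  rw [iff_mod] at hp hg ⊢
  intro i hi
  have hlt : i % p < m := (Nat.mod_lt i hp_pos).trans_le hpm
  rw [hp i hi, hg _ hlt, Nat.mod_mod_of_dvd i hgp]

theorem gcd (hk : HasPeriod f n k) (hl : HasPeriod f n l) (hlen : k + l - Nat.gcd k l ≤ n) :
    HasPeriod f n (Nat.gcd k l) := by
  induction hs : k + l using Nat.strong_induction_on generalizing k l n with
  | _ s ih =>
    wlog hkl : k ≤ l generalizing k l
    · rw [Nat.gcd_comm]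
      exact this hl hk (by rw [Nat.gcd_comm]; omega) (by omega) (by omega)
    rcases Nat.eq_zero_or_pos k with rfl | hk_pos
    · simpa using hl
    rcases hkl.eq_or_lt with rfl | hkl
    · simpa using hk
    have hgcd : Nat.gcd k (l - k) = Nat.gcd k l := Nat.gcd_sub_self_right hkl.le
    have hg_le : Nat.gcd k l ≤ l - k :=
      hgcd ▸ Nat.le_of_dvd (by omega) (Nat.gcd_dvd_right k (l - k))
    have hprefix : HasPeriod f (n - k) (Nat.gcd k l) :=
      hgcd ▸ ih (k + (l - k)) (by omega) (hk.mono_length (Nat.sub_le n k))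
        (hk.sub hl hkl.le) (by omega) rfl
    exact hk.of_prefix_of_dvd hprefix (Nat.gcd_dvd_left k l) hk_pos (by omega)

end HasPeriod

theorem fine_and_wilf_general {α : Type*} (w : List α) (k l : ℕ)
    (hpk : ∀ i, i + k < w.length → w[i]? = w[i + k]?)
    (hpl : ∀ i, i + l < w.length → w[i]? = w[i + l]?)
    (hlen : k + l - Nat.gcd k l ≤ w.length) :
    ∀ i, i + Nat.gcd k l < w.length → w[i]? = w[i + Nat.gcd k l]? :=
  HasPeriod.gcd (f := fun i => w[i]?) hpk hpl hlen

/-- Fine and Wilf: if `w` has periods `k` and `l` and `|w| ≥ k + l - gcd k l`,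
then `gcd k l` is a period of `w`. -/
theorem fine_and_wilf {α : Type*} (w : List α) (k l : ℕ) (hk : 0 < k) (hl : 0 < l)
    (hpk : ∀ i, i + k < w.length → w[i]? = w[i + k]?)
    (hpl : ∀ i, i + l < w.length → w[i]? = w[i + l]?)
    (hlen : k + l - Nat.gcd k l ≤ w.length) :
    ∀ i, i + Nat.gcd k l < w.length → w[i]? = w[i + Nat.gcd k l]? :=
  fine_and_wilf_general w k l hpk hpl hlen
end

section
/- Three squares cannot begin at the same position with lengths in ratio at most 2: if uu, vv, ww are squares that are prefixes of the same word with |u| < |v| < |w| ≤ 2|u|, then u is not primitive. -/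
/-!
Write `p < q < r` for the lengths of `u`, `v`, `w`. Comparing the squares pairwise, `u` has the
periods `q - p` and `r - q`, hence, by the Fine–Wilf periodicity lemma, the period
`g = gcd (q - p) (r - q)`. Comparing all three squares at once, the first `g` letters of `u`
reappear as its last `g` letters, so `u ++ u` has the period `g` besides the period `p`. A second
application of Fine–Wilf gives `u` the period `gcd g p`, a proper divisor of `p`, so `u` is a
proper power.
-/

/-- `k`-fold concatenation power of a word. -/
def wpow {α : Type*} (u : List α) : ℕ → List α
  | 0 => []
  | n + 1 => u ++ wpow u n

/-- A nonempty word is primitive if it is not a proper power. -/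
def Primitive {α : Type*} (p : List α) : Prop :=
  p ≠ [] ∧ ∀ (u : List α) (k : ℕ), 2 ≤ k → p ≠ wpow u k

open List

section

variable {α : Type*}

namespace List

theorem IsPrefix.getElem?_eq {x z : List α} (h : x <+: z) {i : ℕ} (hi : i < x.length) :
    x[i]? = z[i]? := by
  obtain ⟨t, rfl⟩ := h
  exact (getElem?_append_left hi).symm

theorem getElem?_add_length_of_append_self_prefix {x z : List α} (h : x ++ x <+: z) {i : ℕ}
    (hi : i < x.length) : z[i + x.length]? = z[i]? := by
  have hlen : (x ++ x).length = 2 * x.length := by rw [length_append]; omega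
  rw [← h.getElem?_eq (by omega), ← h.getElem?_eq (by omega),
    getElem?_append_right (by omega), getElem?_append_left hi, Nat.add_sub_cancel]

theorem hasPeriod_append_self (x : List α) : (x ++ x).HasPeriod x.length := by
  simp [HasPeriod]

theorem HasPeriod.getElem?_add_of_dvd {u : List α} {g m i : ℕ} (per : u.HasPeriod g)
    (hm : g ∣ m) (hi : i + m < u.length) : u[i + m]? = u[i]? := by
  obtain ⟨c, rfl⟩ := hm
  rw [hasPeriod_iff_forall_getElem?_mod] at per
  rw [per _ hi, Nat.add_mul_mod_self_left, ← per _ (by omega)]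

theorem hasPeriod_sub_of_append_self_prefix {x y z : List α} (hx : x ++ x <+: z)
    (hy : y ++ y <+: z) (hxy : x.length ≤ y.length) :
    x.HasPeriod (y.length - x.length) := by
  have hxz : x <+: z := (prefix_append x x).trans hx
  rw [hasPeriod_iff_getElem?]
  intro i hi
  calc x[i]? = z[i]? := hxz.getElem?_eq (by omega)
    _ = z[i + y.length]? := (getElem?_add_length_of_append_self_prefix hy (by omega)).symm
    _ = z[i + (y.length - x.length) + x.length]? := by congr 1; omega
    _ = z[i + (y.length - x.length)]? := getElem?_add_length_of_append_self_prefix hx (by omega)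
    _ = x[i + (y.length - x.length)]? := (hxz.getElem?_eq (by omega)).symm

theorem getElem?_add_eq_of_three_squares {u v w z : List α} (hu : u ++ u <+: z)
    (hv : v ++ v <+: z) (hw : w ++ w <+: z) (hvw : v.length ≤ w.length)
    (hwu : w.length ≤ 2 * u.length) {j : ℕ} (hjv : j + u.length < v.length)
    (hjw : j + v.length < w.length) :
    u[j + (u.length + v.length - w.length)]? = u[j]? := by
  have huz : u <+: z := (prefix_append u u).trans hu
  calc u[j + (u.length + v.length - w.length)]?
      _ = z[j + (u.length + v.length - w.length)]? := huz.getElem?_eq (by omega)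
      _ = z[j + (u.length + v.length - w.length) + w.length]? :=
        (getElem?_add_length_of_append_self_prefix hw (by omega)).symm
      _ = z[j + u.length + v.length]? := by congr 1; omega
      _ = z[j + u.length]? := getElem?_add_length_of_append_self_prefix hv hjv
      _ = z[j]? := getElem?_add_length_of_append_self_prefix hu (by omega)
      _ = u[j]? := (huz.getElem?_eq (by omega)).symm

theorem drop_length_sub_eq_take {u : List α} {g : ℕ}
    (h : ∀ j < g, u[u.length - g + j]? = u[j]?) : u.drop (u.length - g) = u.take g := by
  ext j : 1
  rw [getElem?_drop, getElem?_take]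
  split_ifs with hj
  · exact h j hj
  · exact getElem?_eq_none (by omega)

theorem HasPeriod.append_self {u : List α} {g : ℕ} (per : u.HasPeriod g) (hg : g ≤ u.length)
    (h : u.drop (u.length - g) = u.take g) : (u ++ u).HasPeriod g := by
  have ⟨c, hc⟩ := per
  have hc' : c = u.take g := by
    have := congrArg (drop u.length) hc
    rwa [drop_left, drop_append, drop_eq_nil_of_le (by simp), nil_append, length_take,
      Nat.min_eq_left hg, h] at this
  show u ++ u <+: take g (u ++ u) ++ (u ++ u)
  rw [take_append_of_le_length hg, ← append_assoc, ← hc, hc', append_assoc]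
  exact (prefix_append_right_inj u).2 per

end List

theorem eq_wpow_take_of_hasPeriod {h : ℕ} :
    ∀ {u : List α} (k : ℕ), u.HasPeriod h → u.length = k * h → u = wpow (u.take h) k
  | u, 0, _, hlen => by simpa [wpow] using hlen
  | u, k + 1, per, hlen => by
    have hlen' : (u.drop h).length = k * h := by simp [hlen, Nat.succ_mul]
    have hdrop := eq_wpow_take_of_hasPeriod k (per.infix (drop_suffix h u).isInfix) hlen'
    rcases k with _ | k
    · simp_all [wpow]
    · have htake : (u.drop h).take h = u.take h :=
        (per.drop_prefix.take h).eq_of_length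
          (by simp only [length_take, hlen', hlen, Nat.succ_mul]; omega)
      rw [htake] at hdrop
      rw [wpow, ← hdrop, take_append_drop]

theorem not_primitive_of_hasPeriod {u : List α} {h : ℕ} (per : u.HasPeriod h)
    (hlt : h < u.length) (hdvd : h ∣ u.length) : ¬ Primitive u := by
  obtain ⟨k, hk⟩ := hdvd
  refine fun hprim => hprim.2 (u.take h) k ?_
    (eq_wpow_take_of_hasPeriod k per (by rw [hk, mul_comm]))
  rcases k with _ | _ | k <;> simp_all

end

theorem three_squares_general {α : Type*} (z u v w : List α)
    (h1 : (u ++ u) <+: z) (h2 : (v ++ v) <+: z) (h3 : (w ++ w) <+: z)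
    (huv : u.length < v.length) (hvw : v.length < w.length)
    (hw : w.length ≤ 2 * u.length) :
    ¬ Primitive u := by
  set d := v.length - u.length
  set f := w.length - v.length
  set g := d.gcd f
  have huv_prefix : u <+: v :=
    prefix_of_prefix_length_le ((prefix_append u u).trans h1) ((prefix_append v v).trans h2)
      huv.le
  have hd : u.HasPeriod d := hasPeriod_sub_of_append_self_prefix h1 h2 huv.le
  have hf : u.HasPeriod f :=
    (hasPeriod_sub_of_append_self_prefix h2 h3 hvw.le).infix huv_prefix.isInfix
  have hg : u.HasPeriod g := hd.gcd hf (by omega)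
  have hg_pos : 0 < g := Nat.gcd_pos_of_pos_left f (by omega)
  have hgd : g ≤ d := Nat.le_of_dvd (by omega) (Nat.gcd_dvd_left d f)
  have hgf : g ≤ f := Nat.le_of_dvd (by omega) (Nat.gcd_dvd_right d f)
  have hsuffix : u.drop (u.length - g) = u.take g := by
    refine drop_length_sub_eq_take fun j hj => ?_
    calc u[u.length - g + j]?
        _ = u[j + (u.length + v.length - w.length) + (f - g)]? := by congr 1; omega
        _ = u[j + (u.length + v.length - w.length)]? :=
          hg.getElem?_add_of_dvd (Nat.dvd_sub (Nat.gcd_dvd_right d f) dvd_rfl) (by omega)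
        _ = u[j]? := getElem?_add_eq_of_three_squares h1 h2 h3 hvw.le hw (by omega) (by omega)
  have huu : (u ++ u).HasPeriod (g.gcd u.length) :=
    (hg.append_self (by omega) hsuffix).gcd (hasPeriod_append_self u)
      (by rw [length_append]; omega)
  have hlt : g.gcd u.length < u.length := (Nat.gcd_le_left _ hg_pos).trans_lt (by omega)
  exact not_primitive_of_hasPeriod (huu.infix (prefix_append u u).isInfix) hlt
    (Nat.gcd_dvd_right g u.length)

/-- Three squares lemma: if squares `uu`, `vv`, `ww` are prefixes of a common
word with `|u| < |v| < |w| ≤ 2|u|`, then `u` is not primitive. -/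
theorem three_squares {α : Type*} (z u v w : List α)
    (hu : u ≠ []) (h1 : (u ++ u) <+: z) (h2 : (v ++ v) <+: z) (h3 : (w ++ w) <+: z)
    (huv : u.length < v.length) (hvw : v.length < w.length)
    (hw : w.length ≤ 2 * u.length) :
    ¬ Primitive u :=
  three_squares_general z u v w h1 h2 h3 huv hvw hw
end

section
/- The number of distinct palindromic factors of a finite word w (including the empty word) is at most |w| + 1. -/
/-!
Map each palindromic factor `u` of `w` to the end position of its first occurrence, a number in
`[0, |w|]`. This map is injective: if palindromes `u` and `v` with `|u| < |v|` first occur ending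
at the same position, then `u` is a suffix, hence (being palindromes) a prefix, of `v`, so `u`
already occurs `|v| - |u|` letters earlier.
-/

namespace List

variable {α : Type*}

theorem IsSuffix.isPrefix_of_reverse_eq {u v : List α} (h : u <:+ v) (hu : u.reverse = u)
    (hv : v.reverse = v) : u <+: v := by
  simpa only [hu, hv] using reverse_prefix.mpr h

theorem exists_lt_isSuffix_take_of_isPrefix {w u v : List α} {i : ℕ} (huv : u <+: v)
    (hlt : u.length < v.length) (hv : v <:+ w.take i) : ∃ j < i, u <:+ w.take j := by
  obtain ⟨t, rfl⟩ := huv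
  obtain ⟨p, hp⟩ := hv
  have hlen : p.length + u.length + t.length ≤ i := by
    simpa [← hp, add_assoc] using length_take_le i w
  have ht : 0 < t.length := by simpa using hlt
  refine ⟨p.length + u.length, by omega, ?_⟩
  have htake : w.take (p.length + u.length) = (w.take i).take (p.length + u.length) := by
    rw [take_take, min_eq_left (by omega)]
  rw [htake, ← hp, ← append_assoc, take_left' (by simp)]
  exact suffix_append p u

theorem IsInfix.exists_isSuffix_take {u w : List α} (h : u <:+: w) :
    ∃ i ≤ w.length, u <:+ w.take i := by
  obtain ⟨t, hut, htw⟩ := infix_iff_suffix_prefix.mp h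
  exact ⟨t.length, htw.length_le, prefix_iff_eq_take.mp htw ▸ hut⟩

/-- The length of the shortest prefix of `w` ending with `u` (junk value `0` if `u` is not a
factor of `w`). -/
noncomputable def firstOccurrenceEnd (w u : List α) : ℕ :=
  sInf {i | u <:+ w.take i}

section firstOccurrenceEnd

variable {u v w : List α}

theorem IsInfix.isSuffix_take_firstOccurrenceEnd (h : u <:+: w) :
    u <:+ w.take (firstOccurrenceEnd w u) :=
  let ⟨i, _, hi⟩ := h.exists_isSuffix_take
  Nat.sInf_mem (s := {i | u <:+ w.take i}) ⟨i, hi⟩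

theorem IsInfix.firstOccurrenceEnd_le_length (h : u <:+: w) : firstOccurrenceEnd w u ≤ w.length :=
  let ⟨_, hi, hu⟩ := h.exists_isSuffix_take
  (Nat.sInf_le hu).trans hi

theorem not_isSuffix_take_of_lt_firstOccurrenceEnd {j : ℕ} (hj : j < firstOccurrenceEnd w u) :
    ¬ u <:+ w.take j :=
  Nat.notMem_of_lt_sInf hj

theorem eq_of_firstOccurrenceEnd_eq_of_length_le (hu : u <:+: w) (hv : v <:+: w)
    (hu' : u.reverse = u) (hv' : v.reverse = v)
    (heq : firstOccurrenceEnd w u = firstOccurrenceEnd w v) (hle : u.length ≤ v.length) :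
    u = v := by
  have hsu := hu.isSuffix_take_firstOccurrenceEnd
  have hsv := hv.isSuffix_take_firstOccurrenceEnd
  rw [← heq] at hsv
  have huv : u <:+ v := suffix_of_suffix_length_le hsu hsv hle
  refine huv.eq_of_length (hle.eq_of_not_lt fun hlt => ?_)
  obtain ⟨j, hj, hsj⟩ :=
    exists_lt_isSuffix_take_of_isPrefix (huv.isPrefix_of_reverse_eq hu' hv') hlt hsv
  exact not_isSuffix_take_of_lt_firstOccurrenceEnd hj hsj

theorem injOn_firstOccurrenceEnd_palindromicFactors (w : List α) :
    Set.InjOn (firstOccurrenceEnd w) {u | u <:+: w ∧ u.reverse = u} := by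
  rintro u ⟨hu, hu'⟩ v ⟨hv, hv'⟩ heq
  rcases le_total u.length v.length with hle | hle
  · exact eq_of_firstOccurrenceEnd_eq_of_length_le hu hv hu' hv' heq hle
  · exact (eq_of_firstOccurrenceEnd_eq_of_length_le hv hu hv' hu' heq.symm hle).symm

end firstOccurrenceEnd

end List

/-- Droubay–Justin–Pirillo: a word `w` has at most `|w| + 1` distinct palindromic
factors (including the empty word). -/
theorem palindrome_count_le {α : Type*} (w : List α) :
    {u : List α | u <:+: w ∧ u.reverse = u}.ncard ≤ w.length + 1 :=
  calc _ ≤ (Set.Iic w.length).ncard :=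
        Set.ncard_le_ncard_of_injOn _ (fun _ hu => hu.1.firstOccurrenceEnd_le_length)
          (List.injOn_firstOccurrenceEnd_palindromicFactors w) (Set.finite_Iic _)
    _ = w.length + 1 := Set.ncard_Iic_nat _
end
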